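/- arXiv:2512.20287 — 6 statements merged into one kernel-verified Lean document; each statement's English description precedes it below -/
import Mathlib

section
/- Let G be a graph on rn vertices with minimum degree at least (r-1)n + 1, let A ⊆ V(G) with |A| = n and e(G[A]) ≤ γn², and let 0 < β < 1/2. Then the number of vertices v ∈ V(G)\A with at most βn neighbors in A is at most 2γn/(1-2β) . -/
/-!
Every vertex of `A` has degree more than `|V| - |A|`, so it has at most as many non-neighbours
outside `A` as neighbours inside `A`. Double counting, the non-edges between `A` and its
complement number at most `∑_{a ∈ A} d_A(a) = 2 e(G[A]) ≤ 2γn²`, while every vertex outside `A`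
with at most `βn` neighbours in `A` accounts for at least `(1 - β)n ≥ (1 - 2β)n` of them.
-/

open Finset

namespace SimpleGraph

variable {V : Type*} [Fintype V] [DecidableEq V] (G : SimpleGraph V) [DecidableRel G.Adj]
  (A : Finset V)

theorem sum_card_filter_adj_eq_two_mul_card_edgeFinset_inter_sym2 :
    ∑ a ∈ A, #{b ∈ A | G.Adj a b} = 2 * #(G.edgeFinset ∩ A.sym2) := by
  have hedges : #(G.induce (A : Set V)).edgeFinset = #(G.edgeFinset ∩ A.sym2) := by
    rw [← card_map (Function.Embedding.subtype (· ∈ (A : Set V))).sym2Map]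
    -- `congr!` reconciles the classical and the `DecidableRel` `Fintype` instances on `induce`
    convert congrArg card (G.map_edgeFinset_induce (s := (A : Set V))) using 3
    · congr!
    · rw [toFinset_coe]
  have hdeg (a : (A : Set V)) : (G.induce (A : Set V)).degree a = #{b ∈ A | G.Adj a b} := by
    rw [← card_neighborFinset_eq_degree, ← card_map (Function.Embedding.subtype _)]
    convert congrArg card (G.map_neighborFinset_induce a) using 1
    · congr!
    · congr 1
      ext b
      simp [and_comm]
  rw [← hedges, ← sum_degrees_eq_twice_card_edges]
  simp_rw [hdeg]
  exact (sum_coe_sort A fun a => #{b ∈ A | G.Adj a b}).symm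

theorem card_filter_not_adj_compl_le {a : V} (hdeg : Fintype.card V - #A ≤ G.degree a) :
    #{v ∈ Aᶜ | ¬G.Adj a v} ≤ #{b ∈ A | G.Adj a b} := by
  have hsplit : #{b ∈ A | G.Adj a b} + #{v ∈ Aᶜ | G.Adj a v} = G.degree a := by
    rw [← card_neighborFinset_eq_degree, neighborFinset_eq_filter, ← union_compl A,
      filter_union, card_union_of_disjoint (disjoint_filter_filter disjoint_compl_right)]
  have hcompl := card_filter_add_card_filter_not (s := Aᶜ) (fun v => G.Adj a v)
  rw [card_compl] at hcompl
  omega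

theorem sum_compl_card_filter_not_adj_le (hdeg : ∀ a ∈ A, Fintype.card V - #A ≤ G.degree a) :
    ∑ v ∈ Aᶜ, #{a ∈ A | ¬G.Adj v a} ≤ 2 * #(G.edgeFinset ∩ A.sym2) := by
  calc ∑ v ∈ Aᶜ, #{a ∈ A | ¬G.Adj v a}
      = ∑ a ∈ A, #{v ∈ Aᶜ | ¬G.Adj a v} := by
        simp only [card_filter]
        rw [sum_comm]
        refine sum_congr rfl fun a _ => sum_congr rfl fun v _ => by simp only [adj_comm]
    _ ≤ ∑ a ∈ A, #{b ∈ A | G.Adj a b} :=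
        sum_le_sum fun a ha => G.card_filter_not_adj_compl_le A (hdeg a ha)
    _ = 2 * #(G.edgeFinset ∩ A.sym2) :=
        G.sum_card_filter_adj_eq_two_mul_card_edgeFinset_inter_sym2 A

theorem card_filter_few_adj_mul_le (hdeg : ∀ a ∈ A, Fintype.card V - #A ≤ G.degree a) (β : ℝ) :
    (#{v | v ∉ A ∧ (#{a ∈ A | G.Adj v a} : ℝ) ≤ β * #A} : ℝ) * ((1 - β) * #A)
      ≤ 2 * #(G.edgeFinset ∩ A.sym2) := by
  set B := ({v | v ∉ A ∧ (#{a ∈ A | G.Adj v a} : ℝ) ≤ β * #A} : Finset V)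
  have hB : B ⊆ Aᶜ := fun v hv => mem_compl.2 (mem_filter.1 hv).2.1
  have hmany (v) (hv : v ∈ B) : (1 - β) * #A ≤ (#{a ∈ A | ¬G.Adj v a} : ℝ) := by
    have hsplit := card_filter_add_card_filter_not (s := A) (fun a => G.Adj v a)
    have hfew := (mem_filter.1 hv).2.2
    rw [← Nat.cast_inj (R := ℝ), Nat.cast_add] at hsplit
    linarith
  calc (#B : ℝ) * ((1 - β) * #A)
      ≤ ∑ v ∈ B, (#{a ∈ A | ¬G.Adj v a} : ℝ) := by
        simpa using card_nsmul_le_sum B _ _ hmany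
    _ ≤ ∑ v ∈ Aᶜ, (#{a ∈ A | ¬G.Adj v a} : ℝ) :=
        sum_le_sum_of_subset_of_nonneg hB fun _ _ _ => Nat.cast_nonneg _
    _ ≤ 2 * #(G.edgeFinset ∩ A.sym2) := by
        exact_mod_cast G.sum_compl_card_filter_not_adj_le A hdeg

end SimpleGraph

theorem stmt5_general {V : Type*} [Fintype V] [DecidableEq V] (r n : ℕ) (hn : 1 ≤ n)
    (G : SimpleGraph V) [DecidableRel G.Adj]
    (hcard : Fintype.card V = r * n)
    (hδ : ∀ v, (r - 1) * n + 1 ≤ G.degree v)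
    (A : Finset V) (hA : A.card = n) (γ β : ℝ) (hβ : 0 < β) (hβ' : β < 1/2)
    (he : ((G.edgeFinset ∩ A.sym2).card : ℝ) ≤ γ * n ^ 2) :
    ((Finset.univ.filter (fun v =>
        v ∉ A ∧ ((A.filter (fun a => G.Adj v a)).card : ℝ) ≤ β * n)).card : ℝ)
      ≤ 2 * γ * n / (1 - 2 * β) := by
  have hdeg : ∀ a ∈ A, Fintype.card V - #A ≤ G.degree a := fun a _ => by
    rw [hcard, hA, ← Nat.sub_one_mul]
    exact (Nat.le_succ _).trans (hδ a)
  have hcount := G.card_filter_few_adj_mul_le A hdeg β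
  rw [hA] at hcount
  have hn' : (0 : ℝ) < n := by exact_mod_cast hn
  rw [le_div_iff₀ (by linarith), ← mul_le_mul_iff_left₀ hn']
  calc _ ≤ (#{v | v ∉ A ∧ (#{a ∈ A | G.Adj v a} : ℝ) ≤ β * n} : ℝ) * ((1 - β) * n) := by
        rw [mul_assoc]
        gcongr
        linarith
    _ ≤ 2 * #(G.edgeFinset ∩ A.sym2) := hcount
    _ ≤ 2 * γ * n * n := by nlinarith

/-- In the setting of a graph on `rn` vertices with min degree `(r-1)n+1` and a
`γ`-independent `n`-set `A`, the number of vertices outside `A` with at most `βn`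
neighbors in `A` is at most `2γn/(1-2β)`. -/
theorem stmt5 {V : Type*} [Fintype V] [DecidableEq V] (r n : ℕ) (hr : 2 ≤ r) (hn : 1 ≤ n)
    (G : SimpleGraph V) [DecidableRel G.Adj]
    (hcard : Fintype.card V = r * n)
    (hδ : ∀ v, (r - 1) * n + 1 ≤ G.degree v)
    (A : Finset V) (hA : A.card = n) (γ β : ℝ) (hγ : 0 < γ) (hβ : 0 < β) (hβ' : β < 1/2)
    (he : ((G.edgeFinset ∩ A.sym2).card : ℝ) ≤ γ * n ^ 2) :
    ((Finset.univ.filter (fun v =>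
        v ∉ A ∧ ((A.filter (fun a => G.Adj v a)).card : ℝ) ≤ β * n)).card : ℝ)
      ≤ 2 * γ * n / (1 - 2 * β) :=
  stmt5_general r n hn G hcard hδ A hA γ β hβ hβ' he
end

section
/- Let G be an ((r-1)n+1)-regular graph on rn vertices and let {A_1,...,A_r} be a partition of V(G) with |A_i| = n for all i. If C_i is a minimum vertex cover of G[A_i] for each i, then max_i |C_i| ≥ √n / r. -/
lemma stmt8_filter_and_split {V : Type*} [Fintype V] (P Q : V → Prop)
    [DecidablePred P] [DecidablePred Q] :
    (Finset.univ.filter (fun w => P w ∧ Q w)).card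
      + (Finset.univ.filter (fun w => ¬ P w ∧ Q w)).card
      = (Finset.univ.filter Q).card := by
  have h1 : Finset.univ.filter (fun w => P w ∧ Q w)
      = (Finset.univ.filter Q).filter P := by
    ext w; simp only [Finset.mem_filter, Finset.mem_univ, true_and]; tauto
  have h2 : Finset.univ.filter (fun w => ¬ P w ∧ Q w)
      = (Finset.univ.filter Q).filter (fun w => ¬ P w) := by
    ext w; simp only [Finset.mem_filter, Finset.mem_univ, true_and]; tauto
  rw [h1, h2, Finset.card_filter_add_card_filter_not]

/-- If `G` is `((r-1)n+1)`-regular on `rn` vertices, `{A_1,…,A_r}` is a balanced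
partition into parts of size `n`, and `C_i` is a minimum vertex cover of `G[A_i]`,
then `max_i |C_i| ≥ √n / r`. -/
theorem stmt8 {V : Type*} [Fintype V] [DecidableEq V] (r n : ℕ) (hr : 2 ≤ r) (hn : 1 ≤ n)
    (G : SimpleGraph V) [DecidableRel G.Adj]
    (hcard : Fintype.card V = r * n)
    (hreg : ∀ v, G.degree v = (r - 1) * n + 1)
    (A : Fin r → Finset V)
    (hdisj : ∀ i j, i ≠ j → Disjoint (A i) (A j))
    (hcover : ∀ v, ∃ i, v ∈ A i)
    (hsize : ∀ i, (A i).card = n)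
    (C : Fin r → Finset V)
    (hCsub : ∀ i, C i ⊆ A i)
    (hCcov : ∀ i, ∀ x ∈ A i, ∀ y ∈ A i, G.Adj x y → x ∈ C i ∨ y ∈ C i)
    (hCmin : ∀ i, ∀ D ⊆ A i,
      (∀ x ∈ A i, ∀ y ∈ A i, G.Adj x y → x ∈ D ∨ y ∈ D) → (C i).card ≤ D.card) :
    ∃ i, Real.sqrt n / r ≤ ((C i).card : ℝ) := by
  choose p hp using hcover
  have huniq : ∀ v i, v ∈ A i → p v = i := by
    intro v i hv
    by_contra h
    exact Finset.disjoint_left.mp (hdisj i (p v) (fun he => h he.symm)) hv (hp v)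
  set din : V → ℕ :=
    fun v => (Finset.univ.filter (fun w => p w = p v ∧ G.Adj v w)).card with hdin
  set xnon : V → ℕ :=
    fun v => (Finset.univ.filter (fun w => ¬ G.Adj v w ∧ ¬ p w = p v)).card with hxnon
  -- every vertex has exactly (n-2) non-neighbours, whence this identity
  have key : ∀ v, xnon v + 1 = din v := by
    intro v
    have h0 : (Finset.univ.filter (fun w => p w = p v)).card = n := by
      have he : Finset.univ.filter (fun w => p w = p v) = A (p v) := by
        ext w
        simp only [Finset.mem_filter, Finset.mem_univ, true_and]
        exact ⟨fun h => h ▸ hp w, fun h => huniq w _ h⟩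
      rw [he, hsize]
    have h1 : (Finset.univ.filter (fun w => p w = p v)).card
        + (Finset.univ.filter (fun w => ¬ p w = p v)).card = r * n := by
      rw [Finset.card_filter_add_card_filter_not, Finset.card_univ, hcard]
    have h2 := stmt8_filter_and_split (fun w => G.Adj v w) (fun w => ¬ p w = p v)
    have h3 := stmt8_filter_and_split (fun w => p w = p v) (fun w => G.Adj v w)
    have hcomm : (Finset.univ.filter (fun w => ¬ p w = p v ∧ G.Adj v w)).card
        = (Finset.univ.filter (fun w => G.Adj v w ∧ ¬ p w = p v)).card := by
      congr 1; ext w; simp only [Finset.mem_filter, Finset.mem_univ, true_and]; tauto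
    have h4 : (Finset.univ.filter (fun w => G.Adj v w)).card = (r - 1) * n + 1 := by
      have he : Finset.univ.filter (fun w => G.Adj v w) = G.neighborFinset v := by
        ext w; simp [SimpleGraph.mem_neighborFinset]
      rw [he]; exact hreg v
    have h5 : n + (r - 1) * n = r * n := by
      have hr1 : r - 1 + 1 = r := by omega
      calc n + (r - 1) * n = (r - 1 + 1) * n := by ring
        _ = r * n := by rw [hr1]
    simp only [hdin, hxnon]
    omega
  set UC : Finset V := Finset.univ.filter (fun v => v ∈ C (p v)) with hUC
  set NC : Finset V := Finset.univ.filter (fun v => ¬ v ∈ C (p v)) with hNC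
  set S : ℕ := ∑ i : Fin r, (C i).card with hS
  have hUCcard : UC.card = S := by
    have h1 : UC = Finset.univ.biUnion C := by
      ext v
      simp only [hUC, Finset.mem_filter, Finset.mem_univ, true_and]
      constructor
      · intro h; exact Finset.mem_biUnion.mpr ⟨p v, Finset.mem_univ _, h⟩
      · intro h
        obtain ⟨i, -, hv⟩ := Finset.mem_biUnion.mp h
        have hpi := huniq v i (hCsub i hv)
        rwa [hpi]
    rw [h1, Finset.card_biUnion]
    intro i _ j _ hij
    exact (hdisj i j hij).mono (hCsub i) (hCsub j)
  have hNCcard : UC.card + NC.card = r * n := by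
    rw [hUC, hNC, Finset.card_filter_add_card_filter_not, Finset.card_univ, hcard]
  have hDI : (∑ v ∈ NC, xnon v) + NC.card = ∑ v ∈ NC, din v := by
    have h1 : ∑ v ∈ NC, (xnon v + 1) = ∑ v ∈ NC, din v :=
      Finset.sum_congr rfl (fun v _ => key v)
    simpa [Finset.sum_add_distrib] using h1
  have hDC : (∑ v ∈ UC, xnon v) + UC.card = ∑ v ∈ UC, din v := by
    have h1 : ∑ v ∈ UC, (xnon v + 1) = ∑ v ∈ UC, din v :=
      Finset.sum_congr rfl (fun v _ => key v)
    simpa [Finset.sum_add_distrib] using h1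
  -- vertices not in the cover have all their inside-neighbours in the cover
  have hDIleDC : ∑ v ∈ NC, din v ≤ ∑ u ∈ UC, din u := by
    have hsub : ∀ v ∈ NC, Finset.univ.filter (fun w => p w = p v ∧ G.Adj v w)
        = UC.filter (fun w => p w = p v ∧ G.Adj v w) := by
      intro v hv
      have hvnc : ¬ v ∈ C (p v) := by
        simpa [hNC, Finset.mem_filter] using hv
      ext w
      simp only [hUC, Finset.mem_filter, Finset.mem_univ, true_and]
      constructor
      · rintro ⟨hpw, hadj⟩
        refine ⟨?_, hpw, hadj⟩
        have hwA : w ∈ A (p v) := hpw ▸ hp w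
        rcases hCcov (p v) v (hp v) w hwA hadj with h | h
        · exact absurd h hvnc
        · rwa [hpw]
      · rintro ⟨-, h⟩; exact h
    calc ∑ v ∈ NC, din v
        = ∑ v ∈ NC, ∑ u ∈ UC, (if p u = p v ∧ G.Adj v u then 1 else 0) := by
          refine Finset.sum_congr rfl (fun v hv => ?_)
          simp only [hdin]
          rw [hsub v hv, Finset.card_filter]
      _ ≤ ∑ v : V, ∑ u ∈ UC, (if p u = p v ∧ G.Adj v u then 1 else 0) := by
          apply Finset.sum_le_sum_of_subset
          rw [hNC]; exact Finset.filter_subset _ _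
      _ = ∑ u ∈ UC, ∑ v : V, (if p u = p v ∧ G.Adj v u then 1 else 0) := Finset.sum_comm
      _ = ∑ u ∈ UC, din u := by
          refine Finset.sum_congr rfl (fun u _ => ?_)
          rw [← Finset.card_filter]
          simp only [hdin]
          congr 1
          ext v
          simp only [Finset.mem_filter, Finset.mem_univ, true_and]
          constructor
          · rintro ⟨h1, h2⟩; exact ⟨h1.symm, h2.symm⟩
          · rintro ⟨h1, h2⟩; exact ⟨h1.symm, h2.symm⟩
  -- the main double count: cross non-adjacencies from cover vertices
  have hkey2 : ∑ v ∈ UC, xnon v ≤ S * S + ∑ w ∈ NC, xnon w := by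
    have hpt : ∀ v : V, xnon v ≤ S
        + ∑ w ∈ NC, (if ¬ G.Adj v w ∧ ¬ p w = p v then 1 else 0) := by
      intro v
      have hsplit := stmt8_filter_and_split (fun w => w ∈ C (p w))
        (fun w => ¬ G.Adj v w ∧ ¬ p w = p v)
      have hle1 : (Finset.univ.filter
          (fun w => w ∈ C (p w) ∧ (¬ G.Adj v w ∧ ¬ p w = p v))).card ≤ S := by
        rw [← hUCcard]
        apply Finset.card_le_card
        intro w hw
        simp only [Finset.mem_filter, Finset.mem_univ, true_and] at hw
        simp only [hUC, Finset.mem_filter, Finset.mem_univ, true_and]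
        exact hw.1
      have heq2 : (Finset.univ.filter
          (fun w => ¬ w ∈ C (p w) ∧ (¬ G.Adj v w ∧ ¬ p w = p v))).card
          = ∑ w ∈ NC, (if ¬ G.Adj v w ∧ ¬ p w = p v then 1 else 0) := by
        rw [← Finset.card_filter]
        congr 1
        ext w
        simp only [hNC, Finset.mem_filter, Finset.mem_univ, true_and]
        try tauto
      simp only [hxnon]
      omega
    calc ∑ v ∈ UC, xnon v
        ≤ ∑ v ∈ UC, (S + ∑ w ∈ NC, (if ¬ G.Adj v w ∧ ¬ p w = p v then 1 else 0)) :=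
          Finset.sum_le_sum (fun v _ => hpt v)
      _ = S * S + ∑ v ∈ UC, ∑ w ∈ NC, (if ¬ G.Adj v w ∧ ¬ p w = p v then 1 else 0) := by
          rw [Finset.sum_add_distrib, Finset.sum_const, hUCcard, smul_eq_mul]
      _ ≤ S * S + ∑ v : V, ∑ w ∈ NC, (if ¬ G.Adj v w ∧ ¬ p w = p v then 1 else 0) := by
          gcongr
          · rw [hUC]; exact Finset.filter_subset _ _
      _ = S * S + ∑ w ∈ NC, ∑ v : V, (if ¬ G.Adj v w ∧ ¬ p w = p v then 1 else 0) := by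
          rw [Finset.sum_comm]
      _ = S * S + ∑ w ∈ NC, xnon w := by
          congr 1
          refine Finset.sum_congr rfl (fun w _ => ?_)
          rw [← Finset.card_filter]
          simp only [hxnon]
          congr 1
          ext v
          simp only [Finset.mem_filter, Finset.mem_univ, true_and]
          constructor
          · rintro ⟨h1, h2⟩
            exact ⟨fun ha => h1 ha.symm, fun hh => h2 hh.symm⟩
          · rintro ⟨h1, h2⟩
            exact ⟨fun ha => h1 ha.symm, fun hh => h2 hh.symm⟩
  -- conclude r n ≤ S² + 2 S
  have main : r * n ≤ S * S + 2 * S := by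
    have e1 := hDI
    have e2 := hDC
    have e3 := hDIleDC
    have e4 := hkey2
    have e5 := hNCcard
    have e6 := hUCcard
    generalize hq : S * S = Q at e4 ⊢
    generalize hrn : r * n = R at e5 ⊢
    omega
  -- pick the maximal cover
  obtain ⟨i₀, -, hmax⟩ := Finset.exists_max_image Finset.univ (fun i => (C i).card)
    ⟨⟨0, by omega⟩, Finset.mem_univ _⟩
  refine ⟨i₀, ?_⟩
  set c : ℕ := (C i₀).card with hc
  have hSc : S ≤ r * c := by
    rw [hS]
    calc ∑ i : Fin r, (C i).card ≤ ∑ _i : Fin r, c :=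
          Finset.sum_le_sum (fun i _ => hmax i (Finset.mem_univ i))
      _ = r * c := by
          rw [Finset.sum_const, Finset.card_univ, Fintype.card_fin, smul_eq_mul]
  have h1 : r * n ≤ (r * c) * (r * c) + 2 * (r * c) := by
    calc r * n ≤ S * S + 2 * S := main
      _ ≤ (r * c) * (r * c) + 2 * (r * c) := by
          gcongr
  have hc1 : 1 ≤ c := by
    by_contra hc0
    have hc0' : c = 0 := by omega
    rw [hc0'] at h1
    simp only [Nat.mul_zero, Nat.zero_mul, Nat.add_zero, Nat.zero_add] at h1
    have h0 : r * n = 0 := Nat.le_zero.mp h1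
    rcases Nat.mul_eq_zero.mp h0 with h | h <;> omega
  have h3 : n ≤ (r * c) * c + 2 * c := by
    have h2 : r * n ≤ r * ((r * c) * c + 2 * c) := by
      calc r * n ≤ (r * c) * (r * c) + 2 * (r * c) := h1
        _ = r * ((r * c) * c + 2 * c) := by ring
    exact Nat.le_of_mul_le_mul_left h2 (by omega)
  have hnc : n ≤ (r * c) * (r * c) := by
    have k1 : 2 * c ≤ r * c := Nat.mul_le_mul hr (le_refl c)
    have k2 : r * c ≤ (r * c) * c := by
      calc r * c = (r * c) * 1 := by ring
        _ ≤ (r * c) * c := Nat.mul_le_mul (le_refl _) hc1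
    have k3 : 2 * ((r * c) * c) ≤ r * ((r * c) * c) := Nat.mul_le_mul hr (le_refl _)
    calc n ≤ (r * c) * c + 2 * c := h3
      _ ≤ (r * c) * c + (r * c) * c :=
          Nat.add_le_add_left (le_trans k1 k2) _
      _ = 2 * ((r * c) * c) := by ring
      _ ≤ r * ((r * c) * c) := k3
      _ = (r * c) * (r * c) := by ring
  -- pass to the reals
  have hr0 : (0 : ℝ) < (r : ℝ) := by
    have : (0 : ℕ) < r := by omega
    exact_mod_cast this
  rw [div_le_iff₀ hr0]
  have h4 : Real.sqrt n ≤ (r : ℝ) * (c : ℝ) := by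
    have h5 : (n : ℝ) ≤ ((r : ℝ) * (c : ℝ)) ^ 2 := by
      rw [sq]
      exact_mod_cast hnc
    calc Real.sqrt n ≤ Real.sqrt (((r : ℝ) * (c : ℝ)) ^ 2) := Real.sqrt_le_sqrt h5
      _ = (r : ℝ) * (c : ℝ) := Real.sqrt_sq (by positivity)
  calc Real.sqrt n ≤ (r : ℝ) * (c : ℝ) := h4
    _ = (c : ℝ) * (r : ℝ) := by ring
end

section
/- Let G be an ((r-1)n+1)-regular graph on rn vertices and let {A_1,...,A_r} be a balanced partition of V(G) into parts of size n. Then not every G[A_i] can be empty; in fact max_i matching-number(G[A_i]) ≥ √n/(2r). -/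
open Finset

private lemma my_dc {V : Type*} [Fintype V] [DecidableEq V]
    (G : SimpleGraph V) [DecidableRel G.Adj] (S T : Finset V) :
    ∑ x ∈ S, (T.filter (fun y => G.Adj x y)).card
      = ∑ y ∈ T, (S.filter (fun x => G.Adj y x)).card := by
  simp only [Finset.card_filter]
  rw [Finset.sum_comm]
  refine Finset.sum_congr rfl fun y _ => Finset.sum_congr rfl fun x _ => ?_
  simp only [G.adj_comm]

private lemma my_matching {V : Type*} [Fintype V] [DecidableEq V]
    (G : SimpleGraph V) [DecidableRel G.Adj] (S : Finset V) :
    ∃ M : Finset (V × V),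
      (∀ p ∈ M, p.1 ∈ S ∧ p.2 ∈ S ∧ G.Adj p.1 p.2) ∧
      (∀ p ∈ M, ∀ q ∈ M, p ≠ q → p.1 ≠ q.1 ∧ p.1 ≠ q.2 ∧ p.2 ≠ q.1 ∧ p.2 ≠ q.2) ∧
      (∀ x ∈ S, ∀ y ∈ S, G.Adj x y →
        x ∈ M.image Prod.fst ∪ M.image Prod.snd ∨
        y ∈ M.image Prod.fst ∪ M.image Prod.snd) := by
  induction S using Finset.strongInduction with
  | _ S ih =>
  by_cases hE : ∃ x ∈ S, ∃ y ∈ S, G.Adj x y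
  · obtain ⟨x, hx, y, hy, hxy⟩ := hE
    have hsub : S \ {x, y} ⊂ S :=
      Finset.sdiff_ssubset (by
        intro z hz; simp only [mem_insert, mem_singleton] at hz
        rcases hz with rfl | rfl <;> assumption) ⟨x, by simp⟩
    obtain ⟨M, h1, h2, h3⟩ := ih _ hsub
    have hmemT : ∀ p ∈ M, p.1 ≠ x ∧ p.1 ≠ y ∧ p.2 ≠ x ∧ p.2 ≠ y := by
      intro p hp
      obtain ⟨ha, hb, -⟩ := h1 p hp
      simp only [mem_sdiff, mem_insert, mem_singleton] at ha hb
      exact ⟨fun h => ha.2 (Or.inl h), fun h => ha.2 (Or.inr h),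
        fun h => hb.2 (Or.inl h), fun h => hb.2 (Or.inr h)⟩
    refine ⟨insert (x, y) M, ?_, ?_, ?_⟩
    · intro p hp
      rcases mem_insert.mp hp with rfl | hp'
      · exact ⟨hx, hy, hxy⟩
      · obtain ⟨ha, hb, hc⟩ := h1 p hp'
        exact ⟨(sdiff_subset) ha, (sdiff_subset) hb, hc⟩
    · intro p hp q hq hne
      rcases mem_insert.mp hp with rfl | hp' <;> rcases mem_insert.mp hq with h' | hq'
      · exact absurd h'.symm hne
      · obtain ⟨q1, q2, q3, q4⟩ := hmemT q hq'
        exact ⟨q1.symm, q3.symm, q2.symm, q4.symm⟩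
      · subst h'
        obtain ⟨p1, p2, p3, p4⟩ := hmemT p hp'
        exact ⟨p1, p2, p3, p4⟩
      · exact h2 p hp' q hq' hne
    · intro a ha b hb hab
      have himg : M.image Prod.fst ∪ M.image Prod.snd ⊆
          (insert (x, y) M).image Prod.fst ∪ (insert (x, y) M).image Prod.snd :=
        Finset.union_subset_union (Finset.image_subset_image (Finset.subset_insert _ _))
          (Finset.image_subset_image (Finset.subset_insert _ _))
      have hxin : x ∈ (insert (x, y) M).image Prod.fst ∪ (insert (x, y) M).image Prod.snd :=
        mem_union_left _ (mem_image.mpr ⟨(x, y), mem_insert_self _ _, rfl⟩)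
      have hyin : y ∈ (insert (x, y) M).image Prod.fst ∪ (insert (x, y) M).image Prod.snd :=
        mem_union_right _ (mem_image.mpr ⟨(x, y), mem_insert_self _ _, rfl⟩)
      by_cases hax : a = x
      · exact Or.inl (hax ▸ hxin)
      by_cases hay : a = y
      · exact Or.inl (hay ▸ hyin)
      by_cases hbx : b = x
      · exact Or.inr (hbx ▸ hxin)
      by_cases hby : b = y
      · exact Or.inr (hby ▸ hyin)
      · have haT : a ∈ S \ {x, y} := mem_sdiff.mpr ⟨ha, by simp [hax, hay]⟩
        have hbT : b ∈ S \ {x, y} := mem_sdiff.mpr ⟨hb, by simp [hbx, hby]⟩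
        exact (h3 a haT b hbT hab).imp (fun h => himg h) (fun h => himg h)
  · exact ⟨∅, by simp, by simp, fun a ha b hb hab => absurd ⟨a, ha, b, hb, hab⟩ hE⟩
/-- If `G` is `((r-1)n+1)`-regular on `rn` vertices with a balanced partition into
parts of size `n`, then some part spans an edge; in fact some `G[A_i]` has a matching
of size at least `√n/(2r)`. -/
theorem stmt9 {V : Type*} [Fintype V] [DecidableEq V] (r n : ℕ) (hr : 2 ≤ r) (hn : 1 ≤ n)
    (G : SimpleGraph V) [DecidableRel G.Adj]
    (hcard : Fintype.card V = r * n)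
    (hreg : ∀ v, G.degree v = (r - 1) * n + 1)
    (A : Fin r → Finset V)
    (hdisj : ∀ i j, i ≠ j → Disjoint (A i) (A j))
    (hcover : ∀ v, ∃ i, v ∈ A i)
    (hsize : ∀ i, (A i).card = n) :
    (∃ i, ∃ x ∈ A i, ∃ y ∈ A i, G.Adj x y) ∧
    ∃ i, ∃ M : Finset (V × V),
      (∀ p ∈ M, p.1 ∈ A i ∧ p.2 ∈ A i ∧ G.Adj p.1 p.2) ∧
      (∀ p ∈ M, ∀ q ∈ M, p ≠ q → p.1 ≠ q.1 ∧ p.1 ≠ q.2 ∧ p.2 ≠ q.1 ∧ p.2 ≠ q.2) ∧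
      Real.sqrt n / (2 * r) ≤ (M.card : ℝ) := by
  classical
  obtain ⟨r', rfl⟩ : ∃ r', r = r' + 1 := ⟨r - 1, by omega⟩
  -- index function
  choose idx hidx using hcover
  have idx_eq : ∀ (v : V) (i : Fin (r' + 1)), v ∈ A i → idx v = i := by
    intro v i hv
    by_contra hne
    exact (Finset.disjoint_left.mp (hdisj _ _ hne) (hidx v)) hv
  set d : V → ℕ := fun v => ((A (idx v)).filter (fun y => G.Adj v y)).card with hd_def
  set h : V → ℕ := fun v => ((univ \ A (idx v)).filter (fun y => ¬ G.Adj v y)).card with hh_def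
  -- key identity : d v = h v + 1
  have key : ∀ v, d v = h v + 1 := by
    intro v
    have hA : A (idx v) ⊆ univ := subset_univ _
    have hu : A (idx v) ∪ (univ \ A (idx v)) = univ := Finset.union_sdiff_of_subset hA
    have hsplit : d v + ((univ \ A (idx v)).filter (fun y => G.Adj v y)).card
        = ((univ : Finset V).filter (fun y => G.Adj v y)).card := by
      show ((A (idx v)).filter (fun y => G.Adj v y)).card
        + ((univ \ A (idx v)).filter (fun y => G.Adj v y)).card = _
      rw [← Finset.card_union_of_disjoint
        (Finset.disjoint_filter_filter Finset.disjoint_sdiff), ← Finset.filter_union, hu]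
    have hdeg : ((univ : Finset V).filter (fun y => G.Adj v y)).card = r' * n + 1 := by
      have h1 : G.neighborFinset v = (univ : Finset V).filter (fun y => G.Adj v y) := by
        ext y; simp [SimpleGraph.mem_neighborFinset]
      have h2 := hreg v
      rw [SimpleGraph.degree, h1] at h2
      simpa using h2
    have hcompl : ((univ \ A (idx v)).filter (fun y => G.Adj v y)).card + h v
        = (univ \ A (idx v)).card := Finset.card_filter_add_card_filter_not _
    have hsd : (univ \ A (idx v)).card = r' * n := by
      rw [Finset.card_sdiff_of_subset hA, Finset.card_univ, hcard, hsize]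
      have : (r' + 1) * n = r' * n + n := by ring
      omega
    omega
  -- maximal matchings
  choose M hM1 hM2 hM3 using fun j => my_matching G (A j)
  set C : Fin (r' + 1) → Finset V := fun j => (M j).image Prod.fst ∪ (M j).image Prod.snd
    with hC_def
  have hCsub : ∀ j, C j ⊆ A j := by
    intro j u hu
    rcases Finset.mem_union.mp hu with h' | h' <;>
      obtain ⟨p, hp, rfl⟩ := Finset.mem_image.mp h'
    · exact (hM1 j p hp).1
    · exact (hM1 j p hp).2.1
  set B : Fin (r' + 1) → Finset V := fun j => A j \ C j with hB_def
  have hBsub : ∀ j, B j ⊆ A j := fun j => sdiff_subset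
  have hBC : ∀ j, (B j).card + (C j).card = n := by
    intro j
    rw [hB_def]
    rw [Finset.card_sdiff_add_card_eq_card (hCsub j), hsize]
  -- per-part inequality
  have partI : ∀ j, (B j).card + ∑ x ∈ B j, h x ≤ (C j).card + ∑ u ∈ C j, h u := by
    intro j
    have step1 : ∀ x ∈ B j, (A j).filter (fun y => G.Adj x y)
        = (C j).filter (fun y => G.Adj x y) := by
      intro x hx
      have hxA : x ∈ A j := (mem_sdiff.mp hx).1
      have hxC : x ∉ C j := (mem_sdiff.mp hx).2
      ext y
      simp only [mem_filter]
      constructor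
      · rintro ⟨hyA, hadj⟩
        rcases hM3 j x hxA y hyA hadj with hc | hc
        · exact absurd hc hxC
        · exact ⟨hc, hadj⟩
      · rintro ⟨hyC, hadj⟩
        exact ⟨hCsub j hyC, hadj⟩
    have idxB : ∀ x ∈ B j, idx x = j := fun x hx => idx_eq x j (hBsub j hx)
    have idxC : ∀ u ∈ C j, idx u = j := fun u hu => idx_eq u j (hCsub j hu)
    calc (B j).card + ∑ x ∈ B j, h x = ∑ x ∈ B j, (h x + 1) := by
          rw [Finset.sum_add_distrib, Finset.sum_const, smul_eq_mul, mul_one, add_comm]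
      _ = ∑ x ∈ B j, d x := by
          refine Finset.sum_congr rfl fun x hx => (key x).symm
      _ = ∑ x ∈ B j, ((C j).filter (fun y => G.Adj x y)).card := by
          refine Finset.sum_congr rfl fun x hx => ?_
          rw [hd_def]
          simp only
          rw [idxB x hx, step1 x hx]
      _ = ∑ u ∈ C j, ((B j).filter (fun y => G.Adj u y)).card := my_dc G (B j) (C j)
      _ ≤ ∑ u ∈ C j, ((A j).filter (fun y => G.Adj u y)).card :=
          Finset.sum_le_sum fun u _ => Finset.card_le_card
            (Finset.filter_subset_filter _ (hBsub j))
      _ = ∑ u ∈ C j, d u := by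
          refine Finset.sum_congr rfl fun u hu => ?_
          rw [hd_def]
          simp only
          rw [idxC u hu]
      _ = ∑ u ∈ C j, (h u + 1) := Finset.sum_congr rfl fun u _ => key u
      _ = (C j).card + ∑ u ∈ C j, h u := by
          rw [Finset.sum_add_distrib, Finset.sum_const, smul_eq_mul, mul_one, add_comm]
  -- global sets
  set CC : Finset V := (univ : Finset (Fin (r' + 1))).biUnion C with hCC_def
  set BB : Finset V := (univ : Finset (Fin (r' + 1))).biUnion B with hBB_def
  have hCdisj : (↑(univ : Finset (Fin (r' + 1))) : Set (Fin (r' + 1))).PairwiseDisjoint C :=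
    fun i _ j _ hij => (hdisj i j hij).mono (hCsub i) (hCsub j)
  have hBdisj : (↑(univ : Finset (Fin (r' + 1))) : Set (Fin (r' + 1))).PairwiseDisjoint B :=
    fun i _ j _ hij => (hdisj i j hij).mono (hBsub i) (hBsub j)
  have hCCcard : CC.card = ∑ j, (C j).card := Finset.card_biUnion
    (fun i _ j _ hij => (hdisj i j hij).mono (hCsub i) (hCsub j))
  have hBBcard : BB.card = ∑ j, (B j).card := Finset.card_biUnion
    (fun i _ j _ hij => (hdisj i j hij).mono (hBsub i) (hBsub j))
  have hsumC : ∀ f : V → ℕ, ∑ u ∈ CC, f u = ∑ j, ∑ u ∈ C j, f u :=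
    fun f => Finset.sum_biUnion hCdisj
  have hsumB : ∀ f : V → ℕ, ∑ x ∈ BB, f x = ∑ j, ∑ x ∈ B j, f x :=
    fun f => Finset.sum_biUnion hBdisj
  -- F1 : summed per-part inequality
  have F1 : BB.card + ∑ x ∈ BB, h x ≤ CC.card + ∑ u ∈ CC, h u := by
    rw [hCCcard, hBBcard, hsumC, hsumB, ← Finset.sum_add_distrib, ← Finset.sum_add_distrib]
    exact Finset.sum_le_sum fun j _ => partI j
  -- F2 : total count
  have F2 : BB.card + CC.card = (r' + 1) * n := by
    rw [hCCcard, hBBcard, ← Finset.sum_add_distrib]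
    rw [Finset.sum_congr rfl fun j _ => hBC j]
    simp [Finset.sum_const, mul_comm]
  -- F3 : cross non-neighbor count
  have F3 : ∑ u ∈ CC, h u ≤ CC.card * CC.card + ∑ x ∈ BB, h x := by
    have hu_bound : ∀ u, h u ≤ CC.card
        + ((BB.filter (fun x => idx x ≠ idx u ∧ ¬ G.Adj u x))).card := by
      intro u
      have hsubs : (univ \ A (idx u)).filter (fun y => ¬ G.Adj u y)
          ⊆ CC ∪ BB.filter (fun x => idx x ≠ idx u ∧ ¬ G.Adj u x) := by
        intro y hy
        obtain ⟨hyU, hyadj⟩ := mem_filter.mp hy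
        have hyA : y ∉ A (idx u) := (mem_sdiff.mp hyU).2
        by_cases hyC : y ∈ C (idx y)
        · exact mem_union_left _ (mem_biUnion.mpr ⟨idx y, mem_univ _, hyC⟩)
        · refine mem_union_right _ (mem_filter.mpr
            ⟨mem_biUnion.mpr ⟨idx y, mem_univ _, mem_sdiff.mpr ⟨hidx y, hyC⟩⟩, ?_, hyadj⟩)
          intro hEq
          exact hyA (hEq ▸ hidx y)
      calc h u = ((univ \ A (idx u)).filter (fun y => ¬ G.Adj u y)).card := rfl
        _ ≤ (CC ∪ BB.filter (fun x => idx x ≠ idx u ∧ ¬ G.Adj u x)).card :=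
            Finset.card_le_card hsubs
        _ ≤ CC.card + _ := Finset.card_union_le _ _
    have swap : ∑ u ∈ CC, ((BB.filter (fun x => idx x ≠ idx u ∧ ¬ G.Adj u x))).card
        ≤ ∑ x ∈ BB, h x := by
      have e1 : ∑ u ∈ CC, ((BB.filter (fun x => idx x ≠ idx u ∧ ¬ G.Adj u x))).card
          = ∑ x ∈ BB, ((CC.filter (fun u => idx x ≠ idx u ∧ ¬ G.Adj u x))).card := by
        simp only [Finset.card_filter]
        rw [Finset.sum_comm]
      rw [e1]
      refine Finset.sum_le_sum fun x hx => ?_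
      have hsub2 : CC.filter (fun u => idx x ≠ idx u ∧ ¬ G.Adj u x)
          ⊆ (univ \ A (idx x)).filter (fun y => ¬ G.Adj x y) := by
        intro u hu
        obtain ⟨huCC, hne, hnadj⟩ := mem_filter.mp hu
        refine mem_filter.mpr ⟨mem_sdiff.mpr ⟨mem_univ _, fun hc => hne (idx_eq u _ hc).symm⟩,
          fun hc => hnadj hc.symm⟩
      exact Finset.card_le_card hsub2
    calc ∑ u ∈ CC, h u
        ≤ ∑ u ∈ CC, (CC.card + ((BB.filter (fun x => idx x ≠ idx u ∧ ¬ G.Adj u x))).card) :=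
          Finset.sum_le_sum fun u _ => hu_bound u
      _ = CC.card * CC.card
          + ∑ u ∈ CC, ((BB.filter (fun x => idx x ≠ idx u ∧ ¬ G.Adj u x))).card := by
          rw [Finset.sum_add_distrib, Finset.sum_const, smul_eq_mul]
      _ ≤ CC.card * CC.card + ∑ x ∈ BB, h x := by
          exact Nat.add_le_add_left swap _
  -- combine
  have main : (r' + 1) * n ≤ 2 * CC.card + CC.card * CC.card := by
    set q := CC.card * CC.card with hq
    omega
  -- choose the best part
  obtain ⟨i0, -, hmax⟩ := Finset.exists_max_image (univ : Finset (Fin (r' + 1)))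
    (fun j => (M j).card) ⟨0, mem_univ _⟩
  set k := (M i0).card with hk
  have hccb : CC.card ≤ (r' + 1) * (2 * k) := by
    rw [hCCcard]
    calc ∑ j, (C j).card ≤ ∑ j : Fin (r' + 1), 2 * k := by
          refine Finset.sum_le_sum fun j _ => ?_
          calc (C j).card ≤ ((M j).image Prod.fst).card + ((M j).image Prod.snd).card :=
                Finset.card_union_le _ _
            _ ≤ (M j).card + (M j).card :=
                Nat.add_le_add Finset.card_image_le Finset.card_image_le
            _ = 2 * (M j).card := (two_mul _).symm
            _ ≤ 2 * k := Nat.mul_le_mul_left _ (hmax j (mem_univ _))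
      _ = (r' + 1) * (2 * k) := by simp [Finset.sum_const, mul_comm]
  -- an edge inside A i0, and k ≥ 1
  have hApos : (A i0).Nonempty := by
    rw [← Finset.card_pos, hsize]; omega
  obtain ⟨v, hv⟩ := hApos
  have hidxv : idx v = i0 := idx_eq v i0 hv
  have hdv : 1 ≤ d v := by rw [key v]; omega
  have hdne : ((A (idx v)).filter (fun y => G.Adj v y)).Nonempty := by
    rw [← Finset.card_pos]; exact hdv
  obtain ⟨w, hw⟩ := hdne
  rw [hidxv] at hw
  obtain ⟨hwA, hadj⟩ := mem_filter.mp hw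
  have hk1 : 1 ≤ k := by
    rcases hM3 i0 v hv w hwA hadj with hc | hc <;>
    · rcases Finset.mem_union.mp hc with h' | h' <;>
        obtain ⟨p, hp, -⟩ := Finset.mem_image.mp h' <;>
        exact Finset.card_pos.mpr ⟨p, hp⟩
  refine ⟨⟨i0, v, hv, w, hwA, hadj⟩, i0, M i0, hM1 i0, hM2 i0, ?_⟩
  -- numeric conclusion
  have hKK : n ≤ (2 * (r' + 1) * k) * (2 * (r' + 1) * k) := by
    have h1 : (r' + 1) * n ≤ 2 * ((r' + 1) * (2 * k))
        + ((r' + 1) * (2 * k)) * ((r' + 1) * (2 * k)) := by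
      refine le_trans main (Nat.add_le_add (Nat.mul_le_mul_left _ hccb)
        (Nat.mul_le_mul hccb hccb))
    have h2 : 2 * ((r' + 1) * (2 * k)) + ((r' + 1) * (2 * k)) * ((r' + 1) * (2 * k))
        ≤ (r' + 1) * ((2 * (r' + 1) * k) * (2 * (r' + 1) * k)) := by
      set m := (r' + 1) * k with hm
      have e : 2 * ((r' + 1) * (2 * k)) + ((r' + 1) * (2 * k)) * ((r' + 1) * (2 * k))
          = 4 * m + 4 * (m * m) := by rw [hm]; ring
      have e2 : (r' + 1) * ((2 * (r' + 1) * k) * (2 * (r' + 1) * k))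
          = 4 * ((r' + 1) * (m * m)) := by rw [hm]; ring
      rw [e, e2]
      have hm1 : 0 < m := Nat.mul_pos (by omega) hk1
      have h4 : m ≤ m * m := Nat.le_mul_of_pos_right m hm1
      have h5 : 2 * (m * m) ≤ (r' + 1) * (m * m) :=
        Nat.mul_le_mul_right (m * m) hr
      linarith
    have h3 : (r' + 1) * n ≤ (r' + 1) * ((2 * (r' + 1) * k) * (2 * (r' + 1) * k)) :=
      le_trans h1 h2
    exact Nat.le_of_mul_le_mul_left h3 (by omega)
  have hcast : (n : ℝ) ≤ ((2 * (r' + 1) * k : ℕ) : ℝ) ^ 2 := by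
    rw [sq]
    exact_mod_cast hKK
  have hsqrt : Real.sqrt n ≤ ((2 * (r' + 1) * k : ℕ) : ℝ) := by
    calc Real.sqrt n ≤ Real.sqrt (((2 * (r' + 1) * k : ℕ) : ℝ) ^ 2) :=
          Real.sqrt_le_sqrt hcast
      _ = ((2 * (r' + 1) * k : ℕ) : ℝ) := Real.sqrt_sq (by positivity)
  have hrpos : (0 : ℝ) < 2 * ((r' : ℝ) + 1) := by positivity
  have hcastr : ((((r' : ℕ) + 1 : ℕ)) : ℝ) = (r' : ℝ) + 1 := by push_cast; ring
  rw [hcastr, div_le_iff₀ hrpos]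
  have hfin : ((2 * (r' + 1) * k : ℕ) : ℝ) = ((M i0).card : ℝ) * (2 * ((r' : ℝ) + 1)) := by
    rw [hk]; push_cast; ring
  linarith [hsqrt, hfin.le, hfin.ge]
end

section
/- Let r ≥ 2 and n ≥ 2r. Consider the graph G obtained from the balanced complete r-partite graph K_{n,...,n} with parts A_1,...,A_r by adding a spanning star inside each part. If S ⊆ V(G) is such that G[S] contains a K_r-factor, then for all i, | |A_i ∩ S| − |S|/r | < 2r. -/
/-!
Let `P` be the cliques of a `K_r`-factor of `G[S]`, so `|S| = r|P|`. Inside a part the edges of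
`G` form a star, so a clique meets a part in at most two vertices, and in two only if it contains
the centre of the star; as the cliques are disjoint, this happens for at most one of them. Hence
every part meets `S` in at most `|P| + 1` vertices, and since the `r` parts together hold `r|P|`
vertices of `S`, each of them also holds at least `|P| - (r - 1)`.
-/

/-- `G[S]` contains a `K_r`-factor. -/
def krFactorOn (r : ℕ) {V : Type*} [DecidableEq V] (G : SimpleGraph V) (S : Finset V) : Prop :=
  ∃ P : Finset (Finset V),
    (∀ T ∈ P, T.card = r ∧ T ⊆ S ∧ ∀ x ∈ T, ∀ y ∈ T, x ≠ y → G.Adj x y) ∧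
    (∀ T ∈ P, ∀ T' ∈ P, T ≠ T' → Disjoint T T') ∧
    (∀ v ∈ S, ∃ T ∈ P, v ∈ T)

open Finset

namespace SimpleGraph

variable {V : Type*} {G : SimpleGraph V} {p : V → Prop} [DecidablePred p] {c : V}

section StarInPart

variable (hstar : ∀ x y, p x → p y → G.Adj x y → x = c ∨ y = c)
include hstar

theorem IsClique.card_filter_le_two {T : Finset V} (hT : G.IsClique (T : Set V)) :
    (T.filter p).card ≤ 2 := by
  classical
  have hrest : ((T.filter p).erase c).card ≤ 1 := by
    refine card_le_one.2 fun x hx y hy => by_contra fun hxy => ?_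
    simp only [mem_erase, mem_filter] at hx hy
    rcases hstar x y hx.2.2 hy.2.2 (hT hx.2.1 hy.2.1 hxy) with h | h
    exacts [hx.1 h, hy.1 h]
  have := pred_card_le_card_erase (s := T.filter p) (a := c)
  omega

theorem IsClique.mem_of_one_lt_card_filter {T : Finset V} (hT : G.IsClique (T : Set V))
    (h : 1 < (T.filter p).card) : c ∈ T := by
  obtain ⟨x, hx, y, hy, hxy⟩ := one_lt_card.1 h
  rw [mem_filter] at hx hy
  rcases hstar x y hx.2 hy.2 (hT hx.1 hy.1 hxy) with rfl | rfl
  exacts [hx.1, hy.1]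

theorem sum_card_filter_le_card_add_one {P : Finset (Finset V)}
    (hP : ∀ T ∈ P, G.IsClique (T : Set V)) (hdisj : (P : Set (Finset V)).PairwiseDisjoint id) :
    ∑ T ∈ P, (T.filter p).card ≤ P.card + 1 := by
  have hbig : (P.filter fun T => 1 < (T.filter p).card).card ≤ 1 := by
    refine card_le_one.2 fun T hT T' hT' => by_contra fun hne => ?_
    rw [mem_filter] at hT hT'
    exact Finset.disjoint_left.1 (hdisj hT.1 hT'.1 hne)
      ((hP T hT.1).mem_of_one_lt_card_filter hstar hT.2)
      ((hP T' hT'.1).mem_of_one_lt_card_filter hstar hT'.2)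
  calc ∑ T ∈ P, (T.filter p).card
      ≤ ∑ T ∈ P, (1 + if 1 < (T.filter p).card then 1 else 0) := by
        refine sum_le_sum fun T hT => ?_
        have := (hP T hT).card_filter_le_two hstar
        split_ifs <;> omega
    _ = P.card + (P.filter fun T => 1 < (T.filter p).card).card := by
        rw [sum_add_distrib, sum_boole, sum_const, smul_eq_mul, mul_one, Nat.cast_id]
    _ ≤ P.card + 1 := by omega

end StarInPart

end SimpleGraph

theorem krFactorOn.exists_cliques {r : ℕ} {V : Type*} [DecidableEq V] {G : SimpleGraph V}
    {S : Finset V} (h : krFactorOn r G S) :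
    ∃ P : Finset (Finset V), (∀ T ∈ P, T.card = r ∧ G.IsClique (T : Set V)) ∧
      (P : Set (Finset V)).PairwiseDisjoint id ∧ S = P.biUnion id := by
  obtain ⟨P, hP, hdisj, hcover⟩ := h
  refine ⟨P, fun T hT => ⟨(hP T hT).1, fun x hx y hy => (hP T hT).2.2 x hx y hy⟩,
    fun T hT T' hT' => hdisj T hT T' hT', ?_⟩
  ext v
  simp only [mem_biUnion, id_eq]
  exact ⟨hcover v, fun ⟨T, hT, hv⟩ => (hP T hT).2.1 hv⟩

theorem le_apply_add_card_of_sum_eq_card_mul {ι : Type*} [Fintype ι] [DecidableEq ι] {f : ι → ℕ}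
    {k : ℕ} (hsum : ∑ j, f j = Fintype.card ι * k) (hle : ∀ j, f j ≤ k + 1) (i : ι) :
    k + 1 ≤ f i + Fintype.card ι := by
  have hrest : ∑ j ∈ univ.erase i, f j ≤ (Fintype.card ι - 1) * (k + 1) := by
    simpa [card_erase_of_mem (mem_univ i)] using sum_le_sum fun j (_ : j ∈ univ.erase i) => hle j
  rw [← add_sum_erase _ _ (mem_univ i)] at hsum
  obtain ⟨m, hm⟩ : ∃ m, Fintype.card ι = m + 1 :=
    Nat.exists_eq_succ_of_ne_zero (Fintype.card_pos_iff.2 ⟨i⟩).ne'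
  rw [hm, Nat.add_sub_cancel] at hrest
  rw [hm] at hsum ⊢
  linarith

theorem stmt15_general (r n : ℕ) (hn : 2 * r ≤ n)
    (G : SimpleGraph (Fin r × Fin n))
    (hG : ∀ x y, G.Adj x y ↔ x ≠ y ∧ (x.1 ≠ y.1 ∨ x.2.val = 0 ∨ y.2.val = 0))
    (S : Finset (Fin r × Fin n))
    (hS : krFactorOn r G S) :
    ∀ i : Fin r,
      |((S.filter (fun x => x.1 = i)).card : ℝ) - (S.card : ℝ) / r| < 2 * r := by
  intro i
  obtain ⟨P, hP, hdisj, hSP⟩ := hS.exists_cliques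
  have hcard : S.card = r * P.card := by
    rw [hSP, card_biUnion hdisj, mul_comm]
    exact sum_const_nat fun T hT => (hP T hT).1
  have hpart (j : Fin r) : (S.filter fun x => x.1 = j).card ≤ P.card + 1 := by
    rw [hSP, filter_biUnion, card_biUnion fun T hT T' hT' h =>
      (hdisj hT hT' h).mono (filter_subset _ _) (filter_subset _ _)]
    refine SimpleGraph.sum_card_filter_le_card_add_one (c := (j, ⟨0, by have := j.pos; omega⟩))
      (fun x y hx hy hxy => ?_) (fun T hT => (hP T hT).2) hdisj
    rcases ((hG x y).1 hxy).2 with h | h | h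
    · exact absurd (hx.trans hy.symm) h
    · exact .inl (Prod.ext hx (Fin.ext h))
    · exact .inr (Prod.ext hy (Fin.ext h))
  have hsum : ∑ j, (S.filter fun x => x.1 = j).card = Fintype.card (Fin r) * P.card := by
    rw [← card_eq_sum_card_fiberwise fun x _ => mem_univ x.1, hcard, Fintype.card_fin]
  have hlow := le_apply_add_card_of_sum_eq_card_mul hsum hpart i
  rw [Fintype.card_fin] at hlow
  have hr : (1 : ℝ) ≤ r := by exact_mod_cast i.pos
  rw [hcard, Nat.cast_mul, mul_div_cancel_left₀ _ (zero_lt_one.trans_le hr).ne', abs_sub_lt_iff]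
  have hup : ((S.filter fun x => x.1 = i).card : ℝ) ≤ P.card + 1 := by exact_mod_cast hpart i
  have hlow' : (P.card : ℝ) + 1 ≤ (S.filter fun x => x.1 = i).card + r := by exact_mod_cast hlow
  constructor <;> linarith

/-- In the balanced complete `r`-partite graph `K_{n,…,n}` with a spanning star added
inside each part (centered at the vertex with second coordinate `0`), every subset `S`
inducing a `K_r`-factor satisfies `||A_i ∩ S| - |S|/r| < 2r` for all `i`. -/
theorem stmt15 (r n : ℕ) (hr : 2 ≤ r) (hn : 2 * r ≤ n)
    (G : SimpleGraph (Fin r × Fin n))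
    (hG : ∀ x y, G.Adj x y ↔ x ≠ y ∧ (x.1 ≠ y.1 ∨ x.2.val = 0 ∨ y.2.val = 0))
    (S : Finset (Fin r × Fin n))
    (hS : krFactorOn r G S) :
    ∀ i : Fin r,
      |((S.filter (fun x => x.1 = i)).card : ℝ) - (S.card : ℝ) / r| < 2 * r :=
  stmt15_general r n hn G hG S hS
end

section
/- Let r ≥ 3, n ≥ 1, and let G be the graph on rn vertices obtained from the complete r-partite graph with parts A_1 of size n + r − 1 and A_2,...,A_r each of size n − 1, by adding an r-regular triangle-free graph inside A_1. Then G is ((r−1)n+1)-regular, and for any S ⊆ V(G) such that G[S] has a K_r-factor, we have: r divides |S|, |S|/r ≤ |A_1 ∩ S| ≤ 2|S|/r, and |A_i ∩ S| ≤ |S|/r for all i ∈ [2,r]. -/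
/-- The concluding construction: the complete `r`-partite graph with parts of sizes
`n+r-1, n-1, …, n-1` plus an `r`-regular triangle-free graph inside the big part is
`((r-1)n+1)`-regular, and any `S` with a `K_r`-factor in `G[S]` satisfies `r ∣ |S|`,
`|S|/r ≤ |A_1 ∩ S| ≤ 2|S|/r` and `|A_i ∩ S| ≤ |S|/r` for `i ≥ 2`. -/
theorem stmt17 {V : Type*} [Fintype V] [DecidableEq V] (r n : ℕ) (hr : 3 ≤ r) (hn : 1 ≤ n)
    (G : SimpleGraph V) [DecidableRel G.Adj]
    (hcard : Fintype.card V = r * n)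
    (A : Fin r → Finset V)
    (hdisj : ∀ i j, i ≠ j → Disjoint (A i) (A j))
    (hcover : ∀ v, ∃ i, v ∈ A i)
    (i0 : Fin r) (hi0 : i0.val = 0)
    (hA0 : (A i0).card = n + r - 1)
    (hAi : ∀ i : Fin r, i ≠ i0 → (A i).card = n - 1)
    (hcross : ∀ i j : Fin r, i ≠ j → ∀ x ∈ A i, ∀ y ∈ A j, G.Adj x y)
    (hind : ∀ i : Fin r, i ≠ i0 → ∀ x ∈ A i, ∀ y ∈ A i, ¬ G.Adj x y)
    (hreg0 : ∀ v ∈ A i0, ((A i0).filter (fun u => G.Adj v u)).card = r)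
    (htf : ∀ x ∈ A i0, ∀ y ∈ A i0, ∀ z ∈ A i0,
      G.Adj x y → G.Adj y z → ¬ G.Adj x z) :
    (∀ v, G.degree v = (r - 1) * n + 1) ∧
    ∀ S : Finset V, krFactorOn r G S →
      r ∣ S.card ∧
      S.card ≤ r * ((A i0) ∩ S).card ∧
      r * ((A i0) ∩ S).card ≤ 2 * S.card ∧
      ∀ i : Fin r, i ≠ i0 → r * ((A i) ∩ S).card ≤ S.card := by
  -- every finset splits as a sum over the parts
  have hsum : ∀ T : Finset V, T.card = ∑ i : Fin r, ((A i) ∩ T).card := by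
    intro T
    have hT : T = Finset.univ.biUnion (fun i => A i ∩ T) := by
      ext v
      simp only [Finset.mem_biUnion, Finset.mem_inter, Finset.mem_univ, true_and]
      constructor
      · intro hv; obtain ⟨i, hi⟩ := hcover v; exact ⟨i, hi, hv⟩
      · rintro ⟨i, _, hv⟩; exact hv
    calc T.card = (Finset.univ.biUnion (fun i => A i ∩ T)).card := by rw [← hT]
      _ = ∑ i : Fin r, (A i ∩ T).card :=
        Finset.card_biUnion (fun i _ j _ hij =>
          (hdisj i j hij).mono Finset.inter_subset_left Finset.inter_subset_left)
  obtain ⟨m, rfl⟩ : ∃ m, n = m + 1 := ⟨n - 1, by omega⟩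
  obtain ⟨s, rfl⟩ : ∃ s, r = s + 3 := ⟨r - 3, by omega⟩
  constructor
  · -- degrees
    intro v
    obtain ⟨k, hk⟩ := hcover v
    rw [SimpleGraph.degree, hsum (G.neighborFinset v)]
    have hfil : ∀ i : Fin (s+3), A i ∩ G.neighborFinset v = (A i).filter (fun u => G.Adj v u) := by
      intro i
      ext u
      simp [Finset.mem_inter, Finset.mem_filter, SimpleGraph.mem_neighborFinset]
    have hterm : ∀ i : Fin (s+3), i ≠ k →
        ((A i) ∩ G.neighborFinset v).card = (A i).card := by
      intro i hik
      rw [hfil i]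
      congr 1
      apply Finset.filter_true_of_mem
      intro u hu
      exact hcross k i (fun h => hik (h.symm)) v hk u hu
    rw [Finset.sum_eq_add_sum_sdiff_singleton_of_mem (Finset.mem_univ k)]
    have hrest : ∀ i ∈ Finset.univ \ {k}, ((A i) ∩ G.neighborFinset v).card = (A i).card := by
      intro i hi
      simp only [Finset.mem_sdiff, Finset.mem_singleton] at hi
      exact hterm i hi.2
    rw [Finset.sum_congr rfl hrest]
    by_cases hk0 : k = i0
    · subst hk0
      have h1 : ((A k) ∩ G.neighborFinset v).card = s + 3 := by
        rw [hfil k]; exact hreg0 v hk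
      have h2 : ∀ i ∈ Finset.univ \ {k}, (A i).card = m := by
        intro i hi
        simp only [Finset.mem_sdiff, Finset.mem_singleton] at hi
        have := hAi i hi.2
        omega
      rw [h1, Finset.sum_congr rfl h2, Finset.sum_const]
      have hc : (Finset.univ \ {k} : Finset (Fin (s+3))).card = s + 2 := by
        rw [Finset.card_sdiff_of_subset (by simp)]; simp
      rw [hc]
      simp only [smul_eq_mul]
      rw [show s + 3 - 1 = s + 2 by omega]
      ring
    · have h1 : ((A k) ∩ G.neighborFinset v).card = 0 := by
        rw [hfil k, Finset.card_eq_zero, Finset.filter_eq_empty_iff]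
        intro u hu
        exact hind k hk0 u hu v hk ∘ (G.adj_symm ·)
      have h2 : ∑ i ∈ Finset.univ \ {k}, (A i).card
          = (A i0).card + ∑ i ∈ (Finset.univ \ {k}) \ {i0}, (A i).card := by
        rw [Finset.sum_eq_add_sum_sdiff_singleton_of_mem]
        simp only [Finset.mem_sdiff, Finset.mem_singleton, Finset.mem_univ, true_and]
        exact fun h => hk0 h.symm
      have h3 : ∀ i ∈ (Finset.univ \ {k}) \ {i0}, (A i).card = m := by
        intro i hi
        simp only [Finset.mem_sdiff, Finset.mem_singleton] at hi
        have := hAi i hi.2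
        omega
      have hc : (((Finset.univ \ {k}) \ {i0}) : Finset (Fin (s+3))).card = s + 1 := by
        rw [Finset.card_sdiff_of_subset (by simp only [Finset.singleton_subset_iff, Finset.mem_sdiff,
          Finset.mem_univ, Finset.mem_singleton, true_and]; exact fun h => hk0 h.symm)]
        rw [Finset.card_sdiff_of_subset (by simp)]
        simp
      rw [h1, h2, Finset.sum_congr rfl h3, Finset.sum_const, hc, hA0]
      simp only [smul_eq_mul]
      have : m + 1 + (s + 3) - 1 = m + s + 3 := by omega
      rw [this, show s + 3 - 1 = s + 2 by omega]
      ring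
  · rintro S ⟨P, hP1, hP2, hP3⟩
    have hSbU : S = P.biUnion id := by
      ext v
      simp only [Finset.mem_biUnion, id]
      constructor
      · exact hP3 v
      · rintro ⟨T, hT, hv⟩; exact (hP1 T hT).2.1 hv
    have hdisjP : ∀ T ∈ P, ∀ T' ∈ P, T ≠ T' → Disjoint (id T) (id T') := hP2
    have hScard : S.card = (s + 3) * P.card := by
      rw [hSbU, Finset.card_biUnion hdisjP]
      simp only [id]
      rw [Finset.sum_congr rfl (fun T hT => (hP1 T hT).1), Finset.sum_const, smul_eq_mul,
        mul_comm]
    have hXcard : ∀ X : Finset V, (X ∩ S).card = ∑ T ∈ P, (X ∩ T).card := by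
      intro X
      have : X ∩ S = P.biUnion (fun T => X ∩ T) := by
        rw [hSbU, Finset.inter_comm]
        rw [Finset.biUnion_inter]
        simp [Finset.inter_comm]
      rw [this, Finset.card_biUnion]
      intro T hT T' hT' hne
      exact (hP2 T hT T' hT' hne).mono Finset.inter_subset_right Finset.inter_subset_right
    -- per-clique bounds
    have hub_i : ∀ i : Fin (s + 3), i ≠ i0 → ∀ T ∈ P, ((A i) ∩ T).card ≤ 1 := by
      intro i hi T hT
      apply Finset.card_le_one.2
      intro x hx y hy
      by_contra hxy
      simp only [Finset.mem_inter] at hx hy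
      exact hind i hi x hx.1 y hy.1 ((hP1 T hT).2.2 x hx.2 y hy.2 hxy)
    have hub0 : ∀ T ∈ P, ((A i0) ∩ T).card ≤ 2 := by
      intro T hT
      by_contra h
      have h3 : 2 < ((A i0) ∩ T).card := by omega
      obtain ⟨x, y, z, hx, hy, hz, hxy, hxz, hyz⟩ := Finset.two_lt_card_iff.1 h3
      simp only [Finset.mem_inter] at hx hy hz
      exact htf x hx.1 y hy.1 z hz.1 ((hP1 T hT).2.2 x hx.2 y hy.2 hxy)
        ((hP1 T hT).2.2 y hy.2 z hz.2 hyz) ((hP1 T hT).2.2 x hx.2 z hz.2 hxz)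
    have hlb0 : ∀ T ∈ P, 1 ≤ ((A i0) ∩ T).card := by
      intro T hT
      by_contra h
      push_neg at h
      have h0 : ((A i0) ∩ T).card = 0 := by omega
      have h1 : T.card = ∑ i : Fin (s + 3), ((A i) ∩ T).card := hsum T
      have h2 : ∑ i : Fin (s + 3), ((A i) ∩ T).card
          = ((A i0) ∩ T).card + ∑ i ∈ Finset.univ \ {i0}, ((A i) ∩ T).card := by
        rw [Finset.sum_eq_add_sum_sdiff_singleton_of_mem (Finset.mem_univ i0)]
      have h3 : ∑ i ∈ Finset.univ \ {i0}, ((A i) ∩ T).card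
          ≤ (Finset.univ \ {i0} : Finset (Fin (s + 3))).card * 1 := by
        apply Finset.sum_le_card_nsmul
        intro i hi
        simp only [Finset.mem_sdiff, Finset.mem_singleton] at hi
        exact hub_i i hi.2 T hT
      have hc : (Finset.univ \ {i0} : Finset (Fin (s + 3))).card = s + 2 := by
        rw [Finset.card_sdiff_of_subset (by simp)]
        simp only [Finset.card_univ, Fintype.card_fin, Finset.card_singleton]
        omega
      have hTc := (hP1 T hT).1
      omega
    have hI0 : P.card ≤ ((A i0) ∩ S).card ∧ ((A i0) ∩ S).card ≤ 2 * P.card := by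
      rw [hXcard (A i0)]
      constructor
      · calc P.card = ∑ _T ∈ P, 1 := by simp
          _ ≤ ∑ T ∈ P, ((A i0) ∩ T).card := Finset.sum_le_sum (fun T hT => hlb0 T hT)
      · calc ∑ T ∈ P, ((A i0) ∩ T).card ≤ ∑ _T ∈ P, 2 :=
            Finset.sum_le_sum (fun T hT => hub0 T hT)
          _ = 2 * P.card := by rw [Finset.sum_const, smul_eq_mul, mul_comm]
    refine ⟨⟨P.card, hScard⟩, ?_, ?_, ?_⟩
    · rw [hScard]
      exact Nat.mul_le_mul_left (s + 3) hI0.1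
    · rw [hScard]
      calc (s + 3) * ((A i0) ∩ S).card ≤ (s + 3) * (2 * P.card) :=
          Nat.mul_le_mul_left (s + 3) hI0.2
        _ = 2 * ((s + 3) * P.card) := by ring
    · intro i hi
      rw [hScard]
      have : ((A i) ∩ S).card ≤ P.card := by
        rw [hXcard (A i)]
        calc ∑ T ∈ P, ((A i) ∩ T).card ≤ ∑ _T ∈ P, 1 :=
            Finset.sum_le_sum (fun T hT => hub_i i hi T hT)
          _ = P.card := by simp
      exact Nat.mul_le_mul_left (s + 3) this
end

section
/- Let r ≥ 2 and n ≥ 4. In the balanced complete r-partite graph K_{n,…,n} on rn vertices, the number of subsets S ⊆ V(G) such that G[S] contains a K_r-factor equals Σ_{k=0}^{n} binom(n,k)^r, and this is at most n·2^{rn}/(πn/2)^{r/2} + 1, hence o(2^{rn}) as n → ∞ for fixed r. -/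
/-!
A set `S` spans a `K_r`-factor of `K_{n,…,n}` iff it meets every part in the same number `k` of
vertices: each `K_r` takes exactly one vertex from every part, and conversely the `j`-th vertices
of the parts form the `j`-th clique. Cutting `S` into its traces on the parts identifies these
sets with `r`-tuples of `k`-subsets of `Fin n`, whence `∑ₖ C(n,k)^r`.

Wallis's lower bound for the partial products `W m` reads `C(2m,m)² π m ≤ 16^m`, which gives
`C(n,k) √(πn/2) ≤ 2^n` for every `k`. Applied to all terms but the last (`k = n`) this is the
explicit estimate; for the limit, `∑ₖ C(n,k)^(s+1) ≤ C(n,⌊n/2⌋)^s 2^n` reduces everything to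
`C(n,⌊n/2⌋) / 2^n → 0`.
-/

open Real Finset Filter Topology

namespace Finset

variable {ι β : Type*}

noncomputable def fiber (S : Finset (ι × β)) (i : ι) : Finset β :=
  S.preimage (Prod.mk i) (Prod.mk_right_injective i).injOn

@[simp]
lemma mem_fiber {S : Finset (ι × β)} {i : ι} {b : β} : b ∈ S.fiber i ↔ (i, b) ∈ S :=
  mem_preimage

lemma card_fiber_eq_one [Fintype ι] {T : Finset (ι × β)} (hT : #T = Fintype.card ι)
    (hinj : Set.InjOn Prod.fst (T : Set (ι × β))) (i : ι) : #(T.fiber i) = 1 := by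
  classical
  have himage : T.image Prod.fst = univ := eq_univ_of_card _ (by rw [card_image_of_injOn hinj, hT])
  obtain ⟨⟨i', b⟩, hb, rfl⟩ := mem_image.mp (himage ▸ mem_univ i)
  refine card_eq_one.mpr ⟨b, ext fun b' => ⟨fun hb' => ?_, fun h => by simpa [mem_singleton.mp h]⟩⟩
  exact mem_singleton.mpr (Prod.ext_iff.mp (hinj (mem_fiber.mp hb') hb rfl)).2

lemma card_fiber_biUnion [DecidableEq ι] [DecidableEq β] {P : Finset (Finset (ι × β))}
    (hP : (P : Set (Finset (ι × β))).PairwiseDisjoint id) {i : ι}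
    (h : ∀ T ∈ P, #(T.fiber i) = 1) : #((P.biUnion id).fiber i) = #P := by
  have hfiber : (P.biUnion id).fiber i = P.biUnion (·.fiber i) := by ext; simp
  rw [hfiber, card_biUnion, sum_congr rfl h, card_eq_sum_ones]
  intro T hT T' hT' hne
  exact disjoint_left.mpr fun b hb hb' =>
    disjoint_left.mp (hP hT hT' hne) (mem_fiber.mp hb) (mem_fiber.mp hb')

variable [Fintype ι] [Fintype β] [DecidableEq ι] [DecidableEq β]

noncomputable def fiberEquiv : Finset (ι × β) ≃ (ι → Finset β) where
  toFun S := S.fiber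
  invFun F := {p | p.2 ∈ F p.1}
  left_inv S := by ext; simp
  right_inv F := by ext; simp

lemma natCard_exists_card_fiber_eq [Nonempty ι] :
    Nat.card {S : Finset (ι × β) // ∃ k, ∀ i, #(S.fiber i) = k} =
      ∑ k ∈ range (Fintype.card β + 1), (Fintype.card β).choose k ^ Fintype.card ι := by
  classical
  obtain ⟨i₀⟩ := ‹Nonempty ι›
  rw [Nat.card_eq_fintype_card, Fintype.card_subtype,
    card_equiv fiberEquiv (t := {F : ι → Finset β | ∃ k, ∀ i, #(F i) = k}) (by simp [fiberEquiv]),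
    card_eq_sum_card_fiberwise (f := fun F => #(F i₀)) (t := range (Fintype.card β + 1))
      (fun F _ => mem_range.mpr (Nat.lt_succ_of_le (card_le_univ _)))]
  refine sum_congr rfl fun k _ => ?_
  have hlevel : ({F : ι → Finset β | ∃ k, ∀ i, #(F i) = k} : Finset _).filter
      (fun F => #(F i₀) = k) = Fintype.piFinset fun _ => powersetCard k univ := by
    ext F
    simp only [mem_filter, mem_univ, true_and, Fintype.mem_piFinset, mem_powersetCard,
      subset_univ]
    exact ⟨fun ⟨⟨l, hl⟩, hk⟩ i => (hl i).trans ((hl i₀).symm.trans hk), fun hF => ⟨⟨k, hF⟩, hF i₀⟩⟩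
  rw [hlevel, Fintype.card_piFinset, prod_const, card_powersetCard, card_univ, card_univ]

end Finset

section Multipartite

variable {ι β : Type*} [Fintype ι] [DecidableEq ι] [DecidableEq β] {G : SimpleGraph (ι × β)}

lemma card_fiber_eq_card_of_krFactorOn (hG : ∀ x y, G.Adj x y ↔ x.1 ≠ y.1)
    {S : Finset (ι × β)} (hS : krFactorOn (Fintype.card ι) G S) :
    ∃ k, ∀ i, #(S.fiber i) = k := by
  obtain ⟨P, hclique, hdisj, hcover⟩ := hS
  have hS : P.biUnion id = S := Subset.antisymm
    (biUnion_subset.mpr fun T hT => (hclique T hT).2.1)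
    fun v hv => by simpa using hcover v hv
  refine ⟨#P, fun i => hS ▸ card_fiber_biUnion hdisj fun T hT => ?_⟩
  obtain ⟨hcard, -, hadj⟩ := hclique T hT
  refine card_fiber_eq_one hcard (fun x hx y hy hxy => ?_) i
  by_contra hne
  exact (hG x y).mp (hadj x hx y hy hne) hxy

lemma krFactorOn_of_card_fiber_eq (hG : ∀ x y, G.Adj x y ↔ x.1 ≠ y.1)
    {S : Finset (ι × β)} {k : ℕ} (hk : ∀ i, #(S.fiber i) = k) :
    krFactorOn (Fintype.card ι) G S := by
  let e i := ((S.fiber i).equivFinOfCardEq (hk i)).symm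
  let T (j : Fin k) : Finset (ι × β) := univ.image fun i => (i, (e i j : β))
  have mem_T {j : Fin k} {v : ι × β} : v ∈ T j ↔ v.2 = e v.1 j := by
    constructor
    · intro hv
      obtain ⟨i, -, rfl⟩ := mem_image.mp hv
      rfl
    · intro hv
      exact mem_image.mpr ⟨v.1, mem_univ _, Prod.ext rfl hv.symm⟩
  refine ⟨univ.image T, ?_, ?_, ?_⟩
  · simp only [mem_image, mem_univ, true_and, forall_exists_index, forall_apply_eq_imp_iff]
    intro j
    refine ⟨card_image_of_injective _ fun i i' h => congrArg Prod.fst h, fun v hv => ?_,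
      fun x hx y hy hxy => (hG x y).mpr fun h => hxy ?_⟩
    · have := mem_fiber.mp (e v.1 j).2
      rwa [← mem_T.mp hv] at this
    · exact Prod.ext h (by rw [mem_T.mp hx, mem_T.mp hy, h])
  · simp only [mem_image, mem_univ, true_and, forall_exists_index, forall_apply_eq_imp_iff]
    intro j j' hne
    refine disjoint_left.mpr fun v hv hv' => hne ?_
    rw [(e v.1).injective (Subtype.ext ((mem_T.mp hv).symm.trans (mem_T.mp hv')))]
  · intro v hv
    refine ⟨T ((e v.1).symm ⟨v.2, mem_fiber.mpr hv⟩), mem_image_of_mem _ (mem_univ _), ?_⟩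
    simp [mem_T]

lemma krFactorOn_iff_exists_card_fiber_eq (hG : ∀ x y, G.Adj x y ↔ x.1 ≠ y.1)
    (S : Finset (ι × β)) :
    krFactorOn (Fintype.card ι) G S ↔ ∃ k, ∀ i, #(S.fiber i) = k :=
  ⟨card_fiber_eq_card_of_krFactorOn hG, fun ⟨_, hk⟩ => krFactorOn_of_card_fiber_eq hG hk⟩

end Multipartite

lemma Real.Wallis.W_eq_centralBinom (m : ℕ) :
    Real.Wallis.W m = 16 ^ m / (m.centralBinom ^ 2 * (2 * m + 1)) := by
  have hfact : ((2 * m).factorial : ℝ) = m.centralBinom * m.factorial * m.factorial := by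
    have := Nat.choose_mul_factorial_mul_factorial (show m ≤ 2 * m by omega)
    rw [show 2 * m - m = m by omega, ← Nat.centralBinom_eq_two_mul_choose] at this
    exact_mod_cast this.symm
  have hf : (m.factorial : ℝ) ≠ 0 := by positivity
  rw [Real.Wallis.W_eq_factorial_ratio, hfact, pow_mul]
  field_simp
  norm_num

lemma Nat.centralBinom_sq_mul_pi_le (m : ℕ) :
    (m.centralBinom : ℝ) ^ 2 * (π * m) ≤ 16 ^ m := by
  have hc : (0 : ℝ) < m.centralBinom := mod_cast m.centralBinom_pos
  have hW := Real.Wallis.le_W m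
  rw [Real.Wallis.W_eq_centralBinom, _root_.div_mul_div_comm,
    div_le_div_iff₀ (by positivity) (by positivity)] at hW
  have hm : (m : ℝ) * (4 * (m + 1)) ≤ (2 * m + 1) ^ 2 := by nlinarith
  have : (m.centralBinom : ℝ) ^ 2 * (π * m) * (4 * (m + 1)) ≤ 16 ^ m * (4 * (m + 1)) := by
    nlinarith [pi_pos, sq_nonneg (m.centralBinom : ℝ)]
  exact le_of_mul_le_mul_right this (by positivity)

lemma Nat.choose_sq_mul_pi_le (n k : ℕ) : (n.choose k : ℝ) ^ 2 * (π * n / 2) ≤ 4 ^ n := by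
  have hle : (n.choose k : ℝ) ^ 2 ≤ (n.choose (n / 2) : ℝ) ^ 2 := by
    gcongr; exact Nat.choose_le_middle k n
  refine (mul_le_mul_of_nonneg_right hle (by positivity)).trans ?_
  obtain ⟨m, rfl | rfl⟩ := Nat.even_or_odd' n
  · rw [Nat.mul_div_cancel_left m two_pos, ← Nat.centralBinom_eq_two_mul_choose]
    calc _ = (m.centralBinom : ℝ) ^ 2 * (π * m) := by push_cast; ring
      _ ≤ 16 ^ m := Nat.centralBinom_sq_mul_pi_le m
      _ = 4 ^ (2 * m) := by rw [pow_mul]; norm_num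
  · have hmid : (2 * (2 * m + 1).choose m : ℝ) = (m + 1).centralBinom := by
      rw [Nat.centralBinom_eq_two_mul_choose, show 2 * (m + 1) = 2 * m + 1 + 1 by ring,
        Nat.choose_succ_succ, Nat.choose_symm_half]
      push_cast; ring
    rw [show (2 * m + 1) / 2 = m by omega]
    calc _ ≤ ((2 * m + 1).choose m : ℝ) ^ 2 * (π * (m + 1)) := by
          gcongr; push_cast; nlinarith [pi_pos]
      _ = ((m + 1).centralBinom : ℝ) ^ 2 * (π * ↑(m + 1)) / 4 := by rw [← hmid]; push_cast; ring
      _ ≤ 16 ^ (m + 1) / 4 := by gcongr; exact Nat.centralBinom_sq_mul_pi_le (m + 1)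
      _ = 4 ^ (2 * m + 1) := by rw [pow_succ, pow_succ, pow_mul]; ring

lemma Nat.choose_mul_sqrt_le (n k : ℕ) : (n.choose k : ℝ) * √(π * n / 2) ≤ 2 ^ n := by
  refine (pow_le_pow_iff_left₀ (by positivity) (by positivity) two_ne_zero).mp ?_
  calc ((n.choose k : ℝ) * √(π * n / 2)) ^ 2 = (n.choose k : ℝ) ^ 2 * (π * n / 2) := by
        rw [mul_pow, sq_sqrt (by positivity)]
    _ ≤ 4 ^ n := Nat.choose_sq_mul_pi_le n k
    _ = (2 ^ n) ^ 2 := by rw [← pow_mul, mul_comm, pow_mul]; norm_num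

lemma sum_range_choose_pow_le {n : ℕ} (hn : 0 < n) (r : ℕ) :
    ∑ k ∈ range (n + 1), (n.choose k : ℝ) ^ r ≤
      n * 2 ^ (r * n) / (π * n / 2) ^ ((r : ℝ) / 2) + 1 := by
  have hpos : 0 < π * n / 2 := by positivity
  have hrpow : (π * n / 2) ^ ((r : ℝ) / 2) = √(π * n / 2) ^ r := by
    rw [sqrt_eq_rpow, ← rpow_natCast, ← rpow_mul hpos.le]
    ring_nf
  have hterm (k : ℕ) : (n.choose k : ℝ) ^ r ≤ 2 ^ (r * n) / (π * n / 2) ^ ((r : ℝ) / 2) := by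
    rw [hrpow, le_div_iff₀ (by positivity), ← mul_pow, mul_comm r, pow_mul]
    gcongr
    exact Nat.choose_mul_sqrt_le n k
  rw [sum_range_succ, Nat.choose_self, Nat.cast_one, one_pow, mul_div_assoc]
  gcongr
  simpa using sum_le_card_nsmul (range n) _ _ fun k _ => hterm k

lemma Nat.sum_range_choose_pow_succ_le (n s : ℕ) :
    ∑ k ∈ range (n + 1), n.choose k ^ (s + 1) ≤ n.choose (n / 2) ^ s * 2 ^ n :=
  calc ∑ k ∈ range (n + 1), n.choose k ^ (s + 1)
      = ∑ k ∈ range (n + 1), n.choose k ^ s * n.choose k := by simp only [pow_succ]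
    _ ≤ ∑ k ∈ range (n + 1), n.choose (n / 2) ^ s * n.choose k :=
        sum_le_sum fun k _ => by gcongr; exact Nat.choose_le_middle k n
    _ = n.choose (n / 2) ^ s * 2 ^ n := by rw [← mul_sum, Nat.sum_range_choose]

lemma sum_range_choose_pow_succ_div_le (n s : ℕ) :
    ((∑ k ∈ range (n + 1), n.choose k ^ (s + 1) : ℕ) : ℝ) / 2 ^ ((s + 1) * n) ≤
      ((n.choose (n / 2) : ℝ) / 2 ^ n) ^ s := by
  have h : ((∑ k ∈ range (n + 1), n.choose k ^ (s + 1) : ℕ) : ℝ) ≤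
      (n.choose (n / 2) : ℝ) ^ s * 2 ^ n := mod_cast Nat.sum_range_choose_pow_succ_le n s
  rw [div_pow, ← pow_mul, div_le_div_iff₀ (by positivity) (by positivity)]
  calc _ ≤ (n.choose (n / 2) : ℝ) ^ s * 2 ^ n * 2 ^ (n * s) := by gcongr
    _ = _ := by ring

lemma tendsto_choose_half_div_two_pow :
    Tendsto (fun n : ℕ => (n.choose (n / 2) : ℝ) / 2 ^ n) atTop (𝓝 0) := by
  have hsqrt : Tendsto (fun n : ℕ => (√(π * n / 2))⁻¹) atTop (𝓝 0) :=
    tendsto_inv_atTop_zero.comp <| tendsto_sqrt_atTop.comp <|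
      (tendsto_natCast_atTop_atTop.const_mul_atTop pi_pos).atTop_div_const two_pos
  refine squeeze_zero' (.of_forall fun n => by positivity) ?_ hsqrt
  filter_upwards [eventually_gt_atTop 0] with n hn
  rw [div_le_iff₀ (by positivity), inv_mul_eq_div, le_div_iff₀ (by positivity)]
  exact Nat.choose_mul_sqrt_le n (n / 2)

/-- In `K_{n,…,n}` the number of subsets `S` inducing a `K_r`-factor equals
`Σ_k binom(n,k)^r`, which is at most `n·2^{rn}/(πn/2)^{r/2} + 1`; hence it is
`o(2^{rn})` as `n → ∞` for fixed `r`. -/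
theorem stmt19 (r : ℕ) (hr : 2 ≤ r) :
    (∀ n : ℕ, 4 ≤ n →
      ∀ G : SimpleGraph (Fin r × Fin n), (∀ x y, G.Adj x y ↔ x.1 ≠ y.1) →
        (Nat.card {S : Finset (Fin r × Fin n) // krFactorOn r G S} =
          ∑ k ∈ Finset.range (n + 1), (n.choose k) ^ r) ∧
        ((∑ k ∈ Finset.range (n + 1), ((n.choose k : ℝ)) ^ r) ≤
          n * 2 ^ (r * n) / (Real.pi * n / 2) ^ ((r : ℝ)/2) + 1)) ∧
    Filter.Tendsto
      (fun n : ℕ => ((∑ k ∈ Finset.range (n + 1), (n.choose k) ^ r : ℕ) : ℝ) / 2 ^ (r * n))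
      Filter.atTop (nhds 0) := by
  refine ⟨fun n hn G hG => ⟨?_, sum_range_choose_pow_le (by omega) r⟩, ?_⟩
  · have : Nonempty (Fin r) := ⟨⟨0, by omega⟩⟩
    have hfactor (S : Finset (Fin r × Fin n)) :
        krFactorOn r G S ↔ ∃ k, ∀ i, #(S.fiber i) = k := by
      simpa only [Fintype.card_fin] using krFactorOn_iff_exists_card_fiber_eq hG S
    rw [Nat.card_congr (Equiv.subtypeEquivRight hfactor), natCard_exists_card_fiber_eq,
      Fintype.card_fin, Fintype.card_fin]
  · obtain ⟨s, rfl⟩ : ∃ s, r = s + 1 := ⟨r - 1, by omega⟩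
    have hlim := tendsto_choose_half_div_two_pow.pow s
    rw [zero_pow (by omega)] at hlim
    exact squeeze_zero (fun n => by positivity) (sum_range_choose_pow_succ_div_le · s) hlim
end
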